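/- For every i ∈ {1,…,p} and every j ∈ {0,…,p−b−1} the following identity holds in R: X_i·ψ(b,j) − X_{b+i+j−ε(i,b+j)}·ψ(b, ε(i,b+j)−b) − X_p^a·φ(i, b+j) + X_0^{a+d}·( φ(i,j) − φ(b+i+j−p, p−b) ) = 0. In particular, this is an R-linear syzygy among the generators φ(i,j), ψ(b,i) of ℘. -/

import Mathlib

open MvPolynomial
open Fin.NatCast

/-- `ε(i,j) = i + j` if `i + j < p`, and `ε(i,j) = p` if `i + j ≥ p`. -/
def eps (p i j : ℕ) : ℕ := if i + j < p then i + j else p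

/-- The binomial `φ(i,j) = X_i·X_j − X_{ε(i,j)}·X_{i+j−ε(i,j)}` for `i, j ∈ {1,…,p−1}`,
with the convention `φ(i,j) = 0` whenever `i ∉ {1,…,p−1}` or `j ∉ {1,…,p−1}`.
(The symmetry convention `φ(i,j) = φ(j,i)` holds automatically for this formula.) -/
noncomputable def phiC (K : Type*) [Field K] (p i j : ℕ) : MvPolynomial (Fin (p + 1)) K :=
  if 1 ≤ i ∧ i < p ∧ 1 ≤ j ∧ j < p then
    X ((i : ℕ) : Fin (p + 1)) * X ((j : ℕ) : Fin (p + 1)) -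
      X ((eps p i j : ℕ) : Fin (p + 1)) * X ((i + j - eps p i j : ℕ) : Fin (p + 1))
  else 0

/-- The binomial `ψ(b,i) = X_{b+i}·X_p^a − X_i·X_0^{a+d}`. -/
noncomputable def psi (K : Type*) [Field K] (p a b d i : ℕ) : MvPolynomial (Fin (p + 1)) K :=
  X ((b + i : ℕ) : Fin (p + 1)) * (X ((p : ℕ) : Fin (p + 1))) ^ a -
    X ((i : ℕ) : Fin (p + 1)) * (X (0 : Fin (p + 1))) ^ (a + d)

lemma eps_of_lt {p i j : ℕ} (h : i + j < p) : eps p i j = i + j := if_pos h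

lemma eps_of_le {p i j : ℕ} (h : p ≤ i + j) : eps p i j = p := if_neg (by omega)

lemma eps_eq_max_of_boundary {p i j : ℕ} (hi : i ≤ p) (hj : j ≤ p)
    (h : i = 0 ∨ i = p ∨ j = 0 ∨ j = p) : eps p i j = max i j := by
  unfold eps; split <;> omega

section

variable (K : Type*) [Field K] (p : ℕ)

/-- On the boundary indices `0` and `p` the binomial formula vanishes by itself, so the cut-off
in `phiC` is invisible for `i, j ≤ p`. -/
lemma phiC_eq {i j : ℕ} (hi : i ≤ p) (hj : j ≤ p) :
    phiC K p i j = X ((i : ℕ) : Fin (p + 1)) * X ((j : ℕ) : Fin (p + 1)) -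
      X ((eps p i j : ℕ) : Fin (p + 1)) * X ((i + j - eps p i j : ℕ) : Fin (p + 1)) := by
  unfold phiC
  split_ifs with h
  · rfl
  · rw [eps_eq_max_of_boundary hi hj (by omega), eq_comm, sub_eq_zero]
    rcases le_total i j with hij | hij
    · rw [max_eq_right hij, Nat.add_sub_cancel, mul_comm]
    · rw [max_eq_left hij, Nat.add_sub_cancel_left]

variable (a b d : ℕ)

noncomputable def syzygyA (i j : ℕ) : MvPolynomial (Fin (p + 1)) K :=
  X ((i : ℕ) : Fin (p + 1)) * psi K p a b d j -
    X ((b + i + j - eps p i (b + j) : ℕ) : Fin (p + 1)) * psi K p a b d (eps p i (b + j) - b) -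
    (X ((p : ℕ) : Fin (p + 1))) ^ a * phiC K p i (b + j) +
    (X (0 : Fin (p + 1))) ^ (a + d) * (phiC K p i j - phiC K p (b + i + j - p) (p - b))

variable {i j : ℕ}

lemma syzygyA_eq_zero_of_lt (hsum : i + (b + j) < p) : syzygyA K p a b d i j = 0 := by
  -- `b + i + j - p` truncates to `0`, so the last `φ` is the zero convention.
  have hphi0 : phiC K p (b + i + j - p) (p - b) = 0 := if_neg (by omega)
  rw [syzygyA, hphi0, phiC_eq K p (by omega) (by omega), phiC_eq K p (by omega) (by omega),
    eps_of_lt hsum, eps_of_lt (by omega : i + j < p),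
    show b + i + j - (i + (b + j)) = 0 by omega, show i + (b + j) - b = i + j by omega,
    show i + (b + j) - (i + (b + j)) = 0 by omega, Nat.sub_self]
  unfold psi
  rw [show b + (i + j) = i + (b + j) by omega, Nat.cast_zero]
  ring

lemma syzygyA_eq_zero_of_le (hi : i ≤ p) (hj : b + j < p) (hsum : p ≤ i + (b + j)) :
    syzygyA K p a b d i j = 0 := by
  -- Both `φ`s at `X_0^{a+d}` have index sum `i + j`, so their second monomials cancel.
  have heps : eps p (b + i + j - p) (p - b) = eps p i j := by
    unfold eps; rw [show b + i + j - p + (p - b) = i + j by omega]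
  rw [syzygyA, phiC_eq K p hi (by omega), phiC_eq K p hi (by omega),
    phiC_eq K p (by omega) (by omega), heps, eps_of_le hsum,
    show b + i + j - p + (p - b) = i + j by omega,
    show i + (b + j) - p = b + i + j - p by omega]
  unfold psi
  rw [show b + (p - b) = p by omega]
  ring

end

theorem syzygy_A_general
    (K : Type*) [Field K]
    (p d a b : ℕ) :
    ∀ i : ℕ, 1 ≤ i → i ≤ p → ∀ j : ℕ, b + j < p →
      X ((i : ℕ) : Fin (p + 1)) * psi K p a b d j -
        X ((b + i + j - eps p i (b + j) : ℕ) : Fin (p + 1)) *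
          psi K p a b d (eps p i (b + j) - b) -
        (X ((p : ℕ) : Fin (p + 1))) ^ a * phiC K p i (b + j) +
        (X (0 : Fin (p + 1))) ^ (a + d) *
          (phiC K p i j - phiC K p (b + i + j - p) (p - b)) = 0 := by
  intro i _ hi j hj
  rcases lt_or_ge (i + (b + j)) p with hsum | hsum
  · exact syzygyA_eq_zero_of_lt K p a b d hsum
  · exact syzygyA_eq_zero_of_le K p a b d hi hj hsum

/-- For `i ∈ {1,…,p}` and `j ∈ {0,…,p−b−1}` the syzygy
`X_i·ψ(b,j) − X_{b+i+j−ε(i,b+j)}·ψ(b,ε(i,b+j)−b) − X_p^a·φ(i,b+j)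
  + X_0^{a+d}·(φ(i,j) − φ(b+i+j−p, p−b)) = 0` holds in `R`. -/
theorem syzygy_A
    (K : Type*) [Field K]
    (p d a b : ℕ) (hp : 2 ≤ p) (hd : 1 ≤ d) (ha : 1 ≤ a) (hb1 : 1 ≤ b) (hbp : b ≤ p)
    (m : ℕ → ℕ) (hm : ∀ i, m i = a * p + b + i * d) :
    ∀ i : ℕ, 1 ≤ i → i ≤ p → ∀ j : ℕ, b + j < p →
      X ((i : ℕ) : Fin (p + 1)) * psi K p a b d j -
        X ((b + i + j - eps p i (b + j) : ℕ) : Fin (p + 1)) *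
          psi K p a b d (eps p i (b + j) - b) -
        (X ((p : ℕ) : Fin (p + 1))) ^ a * phiC K p i (b + j) +
        (X (0 : Fin (p + 1))) ^ (a + d) *
          (phiC K p i j - phiC K p (b + i + j - p) (p - b)) = 0 :=
  syzygy_A_general K p d a b
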